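/- arXiv:2603.07870 — 5 statements merged into one kernel-verified Lean document; each statement's English description precedes it below -/
import Mathlib

section
/- Let d ≥ 1 be an integer, θ ∈ (0,1), and p ≥ 1 a real number. Let Ω ⊆ ℝ^d be a nonempty bounded open set satisfying the interior measure density condition with constant C₀ > 0. Then there exists a constant C > 0, depending only on d, θ, p, C₀, the diameter of Ω (and not on f or H), such that for every function f : ℝ^d → ℝ and every H ≥ 0 with |f(x) − f(y)| ≤ H·‖x − y‖^θ for all x, y in the closure of Ω, one has sup_{x ∈ closure Ω} |f(x)| ≤ C·( H^{d/(pθ+d)} · ‖f‖_{L^p(Ω)}^{pθ/(pθ+d)} + ‖f‖_{L^p(Ω)} ). -/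
open MeasureTheory Metric Set Filter Topology

/-!
Write `|f x| = 2m`. As long as `H r^θ ≤ m`, the Hölder bound keeps `|f| ≥ m` on `B_r(x) ∩ Ω`,
so Markov's inequality and the measure density condition give `m^p r^d ≤ C₀ ‖f‖_p^p` for every
such `r ≤ diam Ω`. If `H (diam Ω)^θ ≤ m` we take `r = diam Ω`, which gives the `‖f‖_p` term;
otherwise we take the critical radius `r = (m / H)^{1/θ}`, at which
`m^{pθ+d} = H^d (m^p r^d)^θ ≤ H^d (C₀ ‖f‖_p^p)^θ`, which gives the interpolation term.
-/

theorem diam_pos_of_isOpen {E : Type*} [NormedAddCommGroup E] [NormedSpace ℝ E] [Nontrivial E]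
    {s : Set E} (hs : IsOpen s) (hne : s.Nonempty) (hb : Bornology.IsBounded s) :
    0 < diam s :=
  let ⟨x, hx⟩ := hne
  diam_pos (infinite_of_mem_nhds x (hs.mem_nhds hx)).nontrivial hb

theorem rpow_add_le_of_mul_rpow_eq {H r M p θ δ K : ℝ} (hH : 0 ≤ H) (hr : 0 ≤ r) (hθ : 0 ≤ θ)
    (hM : 0 < M) (hHr : H * r ^ θ = M) (h : M ^ p * r ^ δ ≤ K) :
    M ^ (p * θ + δ) ≤ H ^ δ * K ^ θ :=
  calc M ^ (p * θ + δ) = (M ^ p) ^ θ * (H * r ^ θ) ^ δ := by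
        rw [Real.rpow_add hM, Real.rpow_mul hM.le, hHr]
    _ = H ^ δ * (M ^ p * r ^ δ) ^ θ := by
        rw [Real.mul_rpow hH (by positivity), Real.mul_rpow (by positivity) (by positivity),
          ← Real.rpow_mul hr, ← Real.rpow_mul hr, mul_comm θ δ]
        ring
    _ ≤ H ^ δ * K ^ θ := by gcongr

theorem le_interpolation_of_forall_radius {θ p δ C₀ D H M N : ℝ} (hθ : 0 < θ) (hp : 0 < p)
    (hδ : 0 ≤ δ) (hC₀ : 0 ≤ C₀) (hD : 0 < D) (hH : 0 ≤ H) (hM : 0 ≤ M) (hN : 0 ≤ N)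
    (h : ∀ r, 0 < r → r ≤ D → H * r ^ θ ≤ M → M ^ p * r ^ δ ≤ C₀ * N ^ p) :
    M ≤ C₀ ^ (θ / (p * θ + δ)) * (H ^ (δ / (p * θ + δ)) * N ^ (p * θ / (p * θ + δ))) +
      (C₀ / D ^ δ) ^ p⁻¹ * N := by
  rcases hM.eq_or_lt with rfl | hM
  · positivity
  have hγ : 0 < p * θ + δ := by positivity
  by_cases hlarge : H * D ^ θ ≤ M
  · have hMD : M ^ p ≤ C₀ / D ^ δ * N ^ p := by
      rw [div_mul_eq_mul_div, le_div_iff₀ (by positivity)]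
      exact h D hD le_rfl hlarge
    refine le_add_of_nonneg_of_le (by positivity) ?_
    calc M = (M ^ p) ^ p⁻¹ := (Real.rpow_rpow_inv hM.le hp.ne').symm
      _ ≤ (C₀ / D ^ δ * N ^ p) ^ p⁻¹ := by gcongr
      _ = (C₀ / D ^ δ) ^ p⁻¹ * N := by
        rw [Real.mul_rpow (by positivity) (by positivity), Real.rpow_rpow_inv hN hp.ne']
  · rw [not_le] at hlarge
    have hH : 0 < H := by
      by_contra! hH0
      nlinarith [le_antisymm hH0 hH, Real.rpow_pos_of_pos hD θ]
    set r := (M / H) ^ θ⁻¹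
    have hr : 0 < r := by positivity
    have hHr : H * r ^ θ = M := by
      rw [Real.rpow_inv_rpow (by positivity) hθ.ne']
      field_simp
    have hrD : r ≤ D :=
      calc r ≤ (D ^ θ) ^ θ⁻¹ := by
            refine Real.rpow_le_rpow (by positivity) ?_ (by positivity)
            rw [div_le_iff₀ hH]
            linarith
        _ = D := Real.rpow_rpow_inv hD.le hθ.ne'
    have hMγ := rpow_add_le_of_mul_rpow_eq hH.le hr.le hθ.le hM hHr (h r hr hrD hHr.le)
    refine le_add_of_le_of_nonneg ?_ (by positivity)
    calc M = (M ^ (p * θ + δ)) ^ (p * θ + δ)⁻¹ := (Real.rpow_rpow_inv hM.le hγ.ne').symm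
      _ ≤ (H ^ δ * (C₀ * N ^ p) ^ θ) ^ (p * θ + δ)⁻¹ := by gcongr
      _ = C₀ ^ (θ / (p * θ + δ)) * (H ^ (δ / (p * θ + δ)) * N ^ (p * θ / (p * θ + δ))) := by
        rw [Real.mul_rpow (by positivity) (by positivity), Real.mul_rpow hC₀ (by positivity),
          Real.mul_rpow (by positivity) (by positivity), ← Real.rpow_mul hH.le,
          ← Real.rpow_mul hC₀, ← Real.rpow_mul hN, ← Real.rpow_mul hN]
        simp only [div_eq_mul_inv, mul_assoc]
        ring

section HolderBound

variable {X : Type*} [PseudoMetricSpace X] {f : X → ℝ} {s : Set X} {H θ p : ℝ}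

theorem continuousOn_of_holder (hθ : 0 < θ)
    (hf : ∀ x ∈ s, ∀ y ∈ s, |f x - f y| ≤ H * dist x y ^ θ) : ContinuousOn f s := by
  intro z hz
  rw [ContinuousWithinAt, tendsto_iff_dist_tendsto_zero]
  have hcont : ContinuousAt (fun y => H * dist y z ^ θ) z := by
    fun_prop (disch := exact Or.inr hθ.le)
  have hlim : Tendsto (fun y => H * dist y z ^ θ) (𝓝[s] z) (𝓝 0) := by
    simpa [Real.zero_rpow hθ.ne'] using hcont.tendsto.mono_left nhdsWithin_le_nhds
  refine squeeze_zero' (.of_forall fun _ => dist_nonneg) ?_ hlim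
  filter_upwards [self_mem_nhdsWithin] with y hy
  exact hf y hy z hz

variable [MeasurableSpace X] {μ : Measure X}

theorem integrableOn_abs_rpow_of_holder [OpensMeasurableSpace X] (hθ : 0 < θ) (hp : 0 ≤ p)
    (hH : 0 ≤ H) (hs : MeasurableSet s) (hb : Bornology.IsBounded s) (hμ : μ s < ⊤)
    (hf : ∀ x ∈ s, ∀ y ∈ s, |f x - f y| ≤ H * dist x y ^ θ) :
    IntegrableOn (fun y => |f y| ^ p) s μ := by
  rcases s.eq_empty_or_nonempty with rfl | ⟨x₀, hx₀⟩
  · exact integrableOn_empty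
  have hmeas := ((continuousOn_of_holder hθ hf).abs.rpow_const fun _ _ => .inr hp)
    |>.aestronglyMeasurable (μ := μ) hs
  refine .of_bound hμ hmeas ((|f x₀| + H * diam s ^ θ) ^ p) ?_
  filter_upwards [ae_restrict_mem hs] with y hy
  have hdist : dist y x₀ ^ θ ≤ diam s ^ θ := by
    gcongr
    exact dist_le_diam_of_mem hb hy hx₀
  have hfy : |f y| ≤ |f x₀| + H * diam s ^ θ := by
    nlinarith [hf y hy x₀ hx₀, abs_sub_abs_le_abs_sub (f y) (f x₀)]
  rw [Real.norm_eq_abs, abs_of_nonneg (by positivity)]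
  gcongr

theorem rpow_mul_measureReal_ball_inter_le_setIntegral {x : X} {r m : ℝ} (hθ : 0 ≤ θ)
    (hp : 0 ≤ p) (hH : 0 ≤ H) (hm : 0 ≤ m) (hs : MeasurableSet s) (hμ : μ s ≠ ⊤)
    (hint : IntegrableOn (fun y => |f y| ^ p) s μ)
    (hf : ∀ y ∈ s, |f x - f y| ≤ H * dist x y ^ θ) (hr : m + H * r ^ θ ≤ |f x|) :
    m ^ p * μ.real (ball x r ∩ s) ≤ ∫ y in s, |f y| ^ p ∂μ := by
  have hsub : ball x r ∩ s ⊆ {y | m ^ p ≤ |f y| ^ p} ∩ s := by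
    rintro y ⟨hyr, hys⟩
    refine ⟨Real.rpow_le_rpow hm ?_ hp, hys⟩
    have hdist : dist x y ^ θ ≤ r ^ θ := by
      gcongr
      exact (mem_ball'.1 hyr).le
    nlinarith [hf y hys, abs_sub_abs_le_abs_sub (f x) (f y)]
  calc m ^ p * μ.real (ball x r ∩ s) ≤ m ^ p * μ.real ({y | m ^ p ≤ |f y| ^ p} ∩ s) := by
        gcongr
        exact measure_ne_top_of_subset inter_subset_right hμ
    _ = m ^ p * (μ.restrict s).real {y | m ^ p ≤ |f y| ^ p} := by
        rw [measureReal_restrict_apply' hs]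
    _ ≤ ∫ y in s, |f y| ^ p ∂μ :=
        mul_meas_ge_le_integral_of_nonneg (ae_of_all _ fun y => by positivity) hint _

theorem rpow_mul_le_mul_setIntegral_of_density {x : X} {r m v C₀ : ℝ} (hθ : 0 ≤ θ)
    (hp : 0 ≤ p) (hH : 0 ≤ H) (hm : 0 ≤ m) (hC₀ : 0 < C₀) (hs : MeasurableSet s) (hμ : μ s ≠ ⊤)
    (hint : IntegrableOn (fun y => |f y| ^ p) s μ)
    (hf : ∀ y ∈ s, |f x - f y| ≤ H * dist x y ^ θ) (hr : m + H * r ^ θ ≤ |f x|)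
    (hv : ENNReal.ofReal (v / C₀) ≤ μ (ball x r ∩ s)) :
    m ^ p * v ≤ C₀ * ∫ y in s, |f y| ^ p ∂μ := by
  have hvol : v / C₀ ≤ μ.real (ball x r ∩ s) :=
    (ENNReal.ofReal_le_iff_le_toReal (measure_ne_top_of_subset inter_subset_right hμ)).1 hv
  calc m ^ p * v = C₀ * (m ^ p * (v / C₀)) := by field_simp
    _ ≤ C₀ * ∫ y in s, |f y| ^ p ∂μ := by
      gcongr
      exact (by gcongr : _ ≤ m ^ p * μ.real _).trans
        (rpow_mul_measureReal_ball_inter_le_setIntegral hθ hp hH hm hs hμ hint hf hr)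

end HolderBound

theorem holder_interpolation_main_general
    (d : ℕ) (hd : 1 ≤ d) (θ p C₀ : ℝ) (hθ : θ ∈ Set.Ioo (0 : ℝ) 1)
    (hp : 1 ≤ p) (hC₀ : 0 < C₀)
    (Ω : Set (EuclideanSpace ℝ (Fin d))) (hΩo : IsOpen Ω)
    (hΩb : Bornology.IsBounded Ω)
    (hdens : ∀ x ∈ closure Ω, ∀ r : ℝ, 0 < r → r ≤ Metric.diam Ω →
      ENNReal.ofReal (r ^ d / C₀) ≤ volume (Metric.ball x r ∩ Ω)) :
    ∃ C : ℝ, 0 < C ∧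
      ∀ (f : EuclideanSpace ℝ (Fin d) → ℝ) (H : ℝ), 0 ≤ H →
        (∀ x ∈ closure Ω, ∀ y ∈ closure Ω, |f x - f y| ≤ H * ‖x - y‖ ^ θ) →
        ∀ x ∈ closure Ω,
          |f x| ≤ C * (H ^ ((d : ℝ) / (p * θ + d)) *
              ((∫ y in Ω, |f y| ^ p) ^ (1 / p)) ^ (p * θ / (p * θ + d)) +
            (∫ y in Ω, |f y| ^ p) ^ (1 / p)) := by
  have : Nonempty (Fin d) := ⟨⟨0, hd⟩⟩
  have hp0 : 0 < p := by linarith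
  set A := C₀ ^ (θ / (p * θ + d))
  set B := (C₀ / diam Ω ^ (d : ℝ)) ^ p⁻¹
  refine ⟨2 * (A + B), by positivity, fun f H hH hf x hx => ?_⟩
  simp_rw [← dist_eq_norm] at hf
  have hD : 0 < diam Ω := diam_pos_of_isOpen hΩo (closure_nonempty_iff.1 ⟨x, hx⟩) hΩb
  have hint := integrableOn_abs_rpow_of_holder (μ := volume) hθ.1 hp0.le hH hΩo.measurableSet
    hΩb hΩb.measure_lt_top fun y hy z hz => hf y (subset_closure hy) z (subset_closure hz)
  set N := (∫ y in Ω, |f y| ^ p) ^ (1 / p)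
  have hNp : N ^ p = ∫ y in Ω, |f y| ^ p := by
    simp only [N, one_div]
    exact Real.rpow_inv_rpow (integral_nonneg fun y => by positivity) hp0.ne'
  have hball : ∀ r, 0 < r → r ≤ diam Ω → H * r ^ θ ≤ |f x| / 2 →
      (|f x| / 2) ^ p * r ^ (d : ℝ) ≤ C₀ * N ^ p := fun r hr hrD hHr => by
    rw [Real.rpow_natCast, hNp]
    exact rpow_mul_le_mul_setIntegral_of_density hθ.1.le hp0.le hH (by positivity) hC₀
      hΩo.measurableSet hΩb.measure_lt_top.ne hint (fun y hy => hf x hx y (subset_closure hy))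
      (by linarith) (hdens x hx r hr hrD)
  have hbound := le_interpolation_of_forall_radius hθ.1 hp0 (Nat.cast_nonneg d) hC₀.le hD hH
    (by positivity) (by positivity) hball
  have hX : 0 ≤ H ^ ((d : ℝ) / (p * θ + d)) * N ^ (p * θ / (p * θ + d)) := by positivity
  have hA : 0 ≤ A := by positivity
  have hB : 0 ≤ B := by positivity
  nlinarith [mul_nonneg hA (by positivity : 0 ≤ N), mul_nonneg hB hX]

/-- Interpolation inequality involving the Hölder seminorm (Lemma `EHRLEM`, inequality (ineq:main)):
on a bounded open set with the interior measure density condition,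
`‖f‖_∞ ≤ C (H^{d/(pθ+d)} ‖f‖_p^{pθ/(pθ+d)} + ‖f‖_p)` for θ-Hölder `f` with seminorm `H`. -/
theorem holder_interpolation_main
    (d : ℕ) (hd : 1 ≤ d) (θ p C₀ : ℝ) (hθ : θ ∈ Set.Ioo (0 : ℝ) 1)
    (hp : 1 ≤ p) (hC₀ : 0 < C₀)
    (Ω : Set (EuclideanSpace ℝ (Fin d))) (hΩne : Ω.Nonempty) (hΩo : IsOpen Ω)
    (hΩb : Bornology.IsBounded Ω)
    (hdens : ∀ x ∈ closure Ω, ∀ r : ℝ, 0 < r → r ≤ Metric.diam Ω →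
      ENNReal.ofReal (r ^ d / C₀) ≤ volume (Metric.ball x r ∩ Ω)) :
    ∃ C : ℝ, 0 < C ∧
      ∀ (f : EuclideanSpace ℝ (Fin d) → ℝ) (H : ℝ), 0 ≤ H →
        (∀ x ∈ closure Ω, ∀ y ∈ closure Ω, |f x - f y| ≤ H * ‖x - y‖ ^ θ) →
        ∀ x ∈ closure Ω,
          |f x| ≤ C * (H ^ ((d : ℝ) / (p * θ + d)) *
              ((∫ y in Ω, |f y| ^ p) ^ (1 / p)) ^ (p * θ / (p * θ + d)) +
            (∫ y in Ω, |f y| ^ p) ^ (1 / p)) :=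
  holder_interpolation_main_general d hd θ p C₀ hθ hp hC₀ Ω hΩo hΩb hdens
end

section
/- Let d ≥ 1 be an integer, θ ∈ (0,1), and p ≥ 1 a real number. Let Ω ⊆ ℝ^d be a nonempty bounded open set satisfying the interior measure density condition with constant C₀ > 0. Let f : ℝ^d → ℝ and H ≥ 0 satisfy |f(x) − f(y)| ≤ H·‖x − y‖^θ for all x, y in the closure of Ω. Then for every x in the closure of Ω and every r with 0 < r ≤ diam Ω, one has the pointwise bound |f(x)| ≤ H·r^θ + C₀^{1/p} · r^{−d/p} · ‖f‖_{L^p(Ω)}. -/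
open MeasureTheory Metric Set

/-!
On `B_r(x) ∩ Ω` the Hölder bound gives `|f| ≥ a := max (|f x| - H r^θ) 0`, so
`a^p · r^d / C₀ ≤ a^p · |B_r(x) ∩ Ω| ≤ ∫_Ω |f|^p` by the measure density condition; solve for `a`.
Hölder continuity makes `|f|^p` integrable on `Ω` (continuous on the compact `closure Ω`), so the
Bochner integral is not the junk value `0`.
-/

theorem HolderOnWith.of_dist_le {X Y : Type*} [PseudoMetricSpace X] [PseudoMetricSpace Y]
    {f : X → Y} {s : Set X} {H θ : ℝ} (hH : 0 ≤ H) (hθ : 0 ≤ θ)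
    (h : ∀ x ∈ s, ∀ y ∈ s, dist (f x) (f y) ≤ H * dist x y ^ θ) :
    HolderOnWith H.toNNReal θ.toNNReal f s := by
  intro x hx y hy
  rw [edist_dist, edist_dist, Real.coe_toNNReal _ hθ, ENNReal.ofReal_rpow_of_nonneg dist_nonneg hθ]
  change _ ≤ ENNReal.ofReal H * _
  rw [← ENNReal.ofReal_mul hH]
  exact ENNReal.ofReal_le_ofReal (h x hx y hy)

theorem abs_sub_mul_rpow_le_abs {E : Type*} [SeminormedAddCommGroup E] {f : E → ℝ} {x y : E}
    {H θ r : ℝ} (hH : 0 ≤ H) (hθ : 0 ≤ θ) (hf : |f x - f y| ≤ H * ‖x - y‖ ^ θ)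
    (hxy : ‖x - y‖ ≤ r) :
    |f x| - H * r ^ θ ≤ |f y| := by
  have := mul_le_mul_of_nonneg_left (Real.rpow_le_rpow (norm_nonneg _) hxy hθ) hH
  linarith [abs_sub_abs_le_abs_sub (f x) (f y)]

theorem mul_measureReal_le_setIntegral {α : Type*} [MeasurableSpace α] {μ : Measure α}
    {g : α → ℝ} {s t : Set α} {c : ℝ} (hs : MeasurableSet s) (hμs : μ s ≠ ⊤) (hst : s ⊆ t)
    (ht : MeasurableSet t) (hg : IntegrableOn g t μ) (hg0 : ∀ y ∈ t, 0 ≤ g y)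
    (hc : ∀ y ∈ s, c ≤ g y) :
    c * μ.real s ≤ ∫ y in t, g y ∂μ :=
  calc c * μ.real s ≤ ∫ y in s, g y ∂μ :=
        setIntegral_ge_of_const_le_real hs hμs hc (hg.mono_set hst)
    _ ≤ ∫ y in t, g y ∂μ :=
        setIntegral_mono_set hg (ae_restrict_of_forall_mem ht hg0) hst.eventuallyLE

theorem le_mul_rpow_of_rpow_mul_div_le {a C r d p I : ℝ} (ha : 0 ≤ a) (hC : 0 < C) (hr : 0 < r)
    (hp : 0 < p) (h : a ^ p * (r ^ d / C) ≤ I) :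
    a ≤ C ^ (1 / p) * r ^ (-d / p) * I ^ (1 / p) := by
  have hrd : 0 < r ^ d / C := div_pos (Real.rpow_pos_of_pos hr d) hC
  have hI : 0 ≤ I := (mul_nonneg (Real.rpow_nonneg ha p) hrd.le).trans h
  rw [← Real.rpow_le_rpow_iff ha (by positivity) hp, Real.mul_rpow (by positivity) (by positivity),
    Real.mul_rpow (by positivity) (by positivity), ← Real.rpow_mul hC.le, ← Real.rpow_mul hr.le,
    ← Real.rpow_mul hI, one_div_mul_cancel hp.ne', Real.rpow_one, Real.rpow_one,
    div_mul_cancel₀ _ hp.ne', Real.rpow_neg hr.le]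
  calc a ^ p = a ^ p * (r ^ d / C) * C * (r ^ d)⁻¹ := by field_simp
    _ ≤ I * C * (r ^ d)⁻¹ := by gcongr
    _ = C * (r ^ d)⁻¹ * I := by ring

theorem holder_interpolation_pointwise_general
    (d : ℕ) (θ p C₀ : ℝ) (hθ : θ ∈ Set.Ioo (0 : ℝ) 1)
    (hp : 1 ≤ p) (hC₀ : 0 < C₀)
    (Ω : Set (EuclideanSpace ℝ (Fin d))) (hΩo : IsOpen Ω)
    (hΩb : Bornology.IsBounded Ω)
    (hdens : ∀ x ∈ closure Ω, ∀ r : ℝ, 0 < r → r ≤ Metric.diam Ω →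
      ENNReal.ofReal (r ^ d / C₀) ≤ volume (Metric.ball x r ∩ Ω))
    (f : EuclideanSpace ℝ (Fin d) → ℝ) (H : ℝ) (hH : 0 ≤ H)
    (hHol : ∀ x ∈ closure Ω, ∀ y ∈ closure Ω, |f x - f y| ≤ H * ‖x - y‖ ^ θ) :
    ∀ x ∈ closure Ω, ∀ r : ℝ, 0 < r → r ≤ Metric.diam Ω →
      |f x| ≤ H * r ^ θ +
        C₀ ^ (1 / p) * r ^ (-(d : ℝ) / p) * (∫ y in Ω, |f y| ^ p) ^ (1 / p) := by
  intro x hx r hr hrd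
  have hp0 : 0 < p := zero_lt_one.trans_le hp
  have hf : ContinuousOn f (closure Ω) :=
    (HolderOnWith.of_dist_le hH hθ.1.le
      (by simpa only [dist_eq_norm, Real.norm_eq_abs] using hHol)).continuousOn
        (Real.toNNReal_pos.2 hθ.1)
  have hint : IntegrableOn (fun y => |f y| ^ p) Ω :=
    ((hf.abs.rpow_const fun _ _ => Or.inr hp0.le).integrableOn_compact
      hΩb.isCompact_closure).mono_set subset_closure
  set a := max (|f x| - H * r ^ θ) 0
  have ha : ∀ y ∈ ball x r ∩ Ω, a ^ p ≤ |f y| ^ p := by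
    rintro y ⟨hyx, hyΩ⟩
    have hxy : ‖x - y‖ ≤ r := by rw [← dist_eq_norm, dist_comm]; exact hyx.le
    refine Real.rpow_le_rpow (le_max_right _ _) (max_le ?_ (abs_nonneg _)) hp0.le
    exact abs_sub_mul_rpow_le_abs hH hθ.1.le (hHol x hx y (subset_closure hyΩ)) hxy
  have hfin : volume (ball x r ∩ Ω) ≠ ⊤ :=
    (measure_mono inter_subset_left).trans_lt measure_ball_lt_top |>.ne
  have hvol : r ^ d / C₀ ≤ volume.real (ball x r ∩ Ω) :=
    (ENNReal.ofReal_le_iff_le_toReal hfin).1 (hdens x hx r hr hrd)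
  have key : a ^ p * (r ^ (d : ℝ) / C₀) ≤ ∫ y in Ω, |f y| ^ p := by
    rw [Real.rpow_natCast]
    exact (mul_le_mul_of_nonneg_left hvol (by positivity)).trans <|
      mul_measureReal_le_setIntegral (measurableSet_ball.inter hΩo.measurableSet) hfin
        inter_subset_right hΩo.measurableSet hint (fun _ _ => by positivity) ha
  linarith [le_max_left (|f x| - H * r ^ θ) 0,
    le_mul_rpow_of_rpow_mul_div_le (le_max_right _ _) hC₀ hr hp0 key]

/-- Pointwise bound (eq:pointwise) in the proof of Lemma `EHRLEM`:
`|f(x)| ≤ H r^θ + C₀^{1/p} r^{-d/p} ‖f‖_{L^p(Ω)}` for all `x ∈ closure Ω` and `0 < r ≤ diam Ω`. -/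
theorem holder_interpolation_pointwise
    (d : ℕ) (hd : 1 ≤ d) (θ p C₀ : ℝ) (hθ : θ ∈ Set.Ioo (0 : ℝ) 1)
    (hp : 1 ≤ p) (hC₀ : 0 < C₀)
    (Ω : Set (EuclideanSpace ℝ (Fin d))) (hΩne : Ω.Nonempty) (hΩo : IsOpen Ω)
    (hΩb : Bornology.IsBounded Ω)
    (hdens : ∀ x ∈ closure Ω, ∀ r : ℝ, 0 < r → r ≤ Metric.diam Ω →
      ENNReal.ofReal (r ^ d / C₀) ≤ volume (Metric.ball x r ∩ Ω))
    (f : EuclideanSpace ℝ (Fin d) → ℝ) (H : ℝ) (hH : 0 ≤ H)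
    (hHol : ∀ x ∈ closure Ω, ∀ y ∈ closure Ω, |f x - f y| ≤ H * ‖x - y‖ ^ θ) :
    ∀ x ∈ closure Ω, ∀ r : ℝ, 0 < r → r ≤ Metric.diam Ω →
      |f x| ≤ H * r ^ θ +
        C₀ ^ (1 / p) * r ^ (-(d : ℝ) / p) * (∫ y in Ω, |f y| ^ p) ^ (1 / p) :=
  holder_interpolation_pointwise_general d θ p C₀ hθ hp hC₀ Ω hΩo hΩb hdens f H hH hHol
end

section
/- Let d ≥ 2 be an integer. For η ∈ (0, e^{−1}) let ψ_η : ℝ^d → ℝ be the logarithmic cut-off function defined by ψ_η(x) = ln(−ln‖x‖) − ln(−ln η) for 0 < ‖x‖ < η and ψ_η(x) = 0 otherwise. Then ∫_{{x : 0 < ‖x‖ < η}} ( ln(−ln‖x‖) − ln(−ln η) )² · (‖x‖ · ln‖x‖)^{−2} dx → 0 as η → 0⁺. (This integral equals ∫ ψ_η² |∇ψ_η|² = ¼ ∫ |∇(ψ_η²)|², so the L²(ℝ^d)-norm of the gradient of ψ_η² tends to 0 as η → 0⁺.) -/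
/-!
In polar coordinates, and since `r ^ (d - 1) ≤ r` for `r < 1`, the integral is at most
`|S^{d-1}| ∫₀^η (ln (t / T))² / (r t²) dr` with `t = -ln r`, `T = -ln η`. The substitution
`r = exp (-T s)` turns the radial integral into `T⁻¹ ∫₁^∞ (ln s)² / s² ds`: a finite constant
divided by `T`, and `T → ∞` as `η → 0⁺`.
-/

open MeasureTheory Filter Set Real Metric Module
open scoped ENNReal

theorem lintegral_fun_norm_addHaar {E : Type*} [NormedAddCommGroup E] [NormedSpace ℝ E]
    [MeasurableSpace E] [BorelSpace E] [Nontrivial E] [FiniteDimensional ℝ E]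
    (μ : Measure E) [μ.IsAddHaarMeasure] {g : ℝ → ℝ≥0∞} (hg : Measurable g) :
    ∫⁻ x, g ‖x‖ ∂μ
      = μ.toSphere univ * ∫⁻ r in Ioi (0 : ℝ), ENNReal.ofReal (r ^ (finrank ℝ E - 1)) * g r := by
  have h0 : MeasurableSet ({0}ᶜ : Set E) := (measurableSet_singleton 0).compl
  have hm : Measurable (fun p : sphere (0 : E) 1 × Ioi (0 : ℝ) => g p.2.1) :=
    hg.comp (measurable_subtype_coe.comp measurable_snd)
  have hgs : Measurable (fun r : Ioi (0 : ℝ) => g r.1) := hg.comp measurable_subtype_coe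
  calc ∫⁻ x, g ‖x‖ ∂μ = ∫⁻ x in ({0}ᶜ : Set E), g ‖x‖ ∂μ := by
        rw [restrict_compl_singleton]
    _ = ∫⁻ x : ({0}ᶜ : Set E), g ‖(x : E)‖ ∂(μ.comap (↑)) :=
        (lintegral_subtype_comap h0 _).symm
    _ = ∫⁻ p : sphere (0 : E) 1 × Ioi (0 : ℝ), g p.2.1
          ∂(μ.toSphere.prod (.volumeIoiPow (finrank ℝ E - 1))) := by
        rw [← (μ.measurePreserving_homeomorphUnitSphereProd).lintegral_comp hm]
        simp
    _ = μ.toSphere univ *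
          ∫⁻ r : Ioi (0 : ℝ), g r.1 ∂(Measure.volumeIoiPow (finrank ℝ E - 1)) := by
        rw [lintegral_prod _ hm.aemeasurable]
        simp [lintegral_const, mul_comm]
    _ = μ.toSphere univ *
          ∫⁻ r in Ioi (0 : ℝ), ENNReal.ofReal (r ^ (finrank ℝ E - 1)) * g r := by
        congr 1
        rw [Measure.volumeIoiPow, lintegral_withDensity_eq_lintegral_mul _
          (f := fun r : Ioi (0 : ℝ) => ENNReal.ofReal (r.1 ^ (finrank ℝ E - 1)))
          ((measurable_subtype_coe.pow_const _).ennreal_ofReal) hgs]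
        exact lintegral_subtype_comap measurableSet_Ioi
          (fun r => ENNReal.ofReal (r ^ (finrank ℝ E - 1)) * g r)

theorem sq_log_le_rpow {s : ℝ} (hs : 1 ≤ s) : log s ^ 2 ≤ 16 * s ^ (1 / 2 : ℝ) := by
  calc log s ^ 2 ≤ (s ^ (1 / 4 : ℝ) / (1 / 4)) ^ 2 := by
        gcongr
        · exact log_nonneg hs
        · exact log_le_rpow_div (by linarith) (by norm_num)
    _ = 16 * s ^ (1 / 2 : ℝ) := by
        rw [div_pow, ← rpow_natCast, ← rpow_mul (by linarith)]
        norm_num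
        ring

theorem integrableOn_log_sq_div_sq : IntegrableOn (fun s : ℝ => log s ^ 2 / s ^ 2) (Ioi 1) := by
  refine ((integrableOn_Ioi_rpow_of_lt (by norm_num : (-3 / 2 : ℝ) < -1) one_pos).const_mul
    16).mono' (Measurable.aestronglyMeasurable (by fun_prop)) ?_
  filter_upwards [ae_restrict_mem measurableSet_Ioi] with s (hs : 1 < s)
  have hs0 : 0 < s := one_pos.trans hs
  rw [Real.norm_of_nonneg (by positivity), div_le_iff₀ (by positivity)]
  calc log s ^ 2 ≤ 16 * s ^ (1 / 2 : ℝ) := sq_log_le_rpow hs.le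
    _ = 16 * s ^ (-3 / 2 : ℝ) * s ^ 2 := by
        rw [mul_assoc, ← rpow_natCast, ← rpow_add hs0]
        norm_num

theorem image_exp_neg_mul_Ioi_one {T : ℝ} (hT : 0 < T) :
    (fun s => exp (-(T * s))) '' Ioi 1 = Ioo 0 (exp (-T)) := by
  ext r
  constructor
  · rintro ⟨s, hs, rfl⟩
    exact ⟨exp_pos _, exp_lt_exp.2 (by nlinarith [mem_Ioi.1 hs])⟩
  · rintro ⟨hr0, hrT⟩
    refine ⟨-log r / T, ?_, by simp [mul_div_cancel₀ _ hT.ne', exp_log hr0]⟩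
    rw [mem_Ioi, one_lt_div hT, lt_neg, ← log_exp (-T)]
    exact log_lt_log hr0 hrT

/-- `ψ_η(x)² |∇ψ_η(x)|²` at `‖x‖ = r`, for `0 < r < η`. -/
noncomputable def logCutoffGradSq (η r : ℝ) : ℝ :=
  (log (-log r) - log (-log η)) ^ 2 * ((r * log r) ^ 2)⁻¹

theorem measurable_logCutoffGradSq (η : ℝ) : Measurable (logCutoffGradSq η) := by
  unfold logCutoffGradSq
  fun_prop

theorem lintegral_Ioo_mul_logCutoffGradSq {η : ℝ} (h0 : 0 < η) (h1 : η < 1) :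
    ∫⁻ r in Ioo 0 η, ENNReal.ofReal (r * logCutoffGradSq η r)
      = ENNReal.ofReal (-log η)⁻¹ * ∫⁻ s in Ioi 1, ENNReal.ofReal (log s ^ 2 / s ^ 2) := by
  set T := -log η with hTdef
  have hT : 0 < T := neg_pos.2 (log_neg h0 h1)
  have hη : η = exp (-T) := by rw [hTdef, neg_neg, exp_log h0]
  have hderiv : ∀ s ∈ Ioi (1 : ℝ),
      HasDerivWithinAt (fun s => exp (-(T * s))) (-(T * exp (-(T * s)))) (Ioi 1) s :=
    fun s _ => by
      simpa [mul_comm] using (((hasDerivAt_id s).const_mul T).neg.exp).hasDerivWithinAt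
  have hinj : InjOn (fun s => exp (-(T * s))) (Ioi 1) := fun s _ t _ hst => by
    simpa [hT.ne'] using hst
  rw [hη, ← image_exp_neg_mul_Ioi_one hT,
    lintegral_image_eq_lintegral_abs_deriv_mul measurableSet_Ioi hderiv hinj, ← hη,
    ← lintegral_const_mul _ (by fun_prop)]
  refine setLIntegral_congr_fun measurableSet_Ioi fun s (hs : 1 < s) => ?_
  have hs0 : 0 < s := one_pos.trans hs
  rw [← ENNReal.ofReal_mul (abs_nonneg _), ← ENNReal.ofReal_mul (by positivity)]
  congr 1
  simp only [logCutoffGradSq, log_exp, neg_neg, abs_neg,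
    abs_of_pos (by positivity : 0 < T * exp (-(T * s))), log_mul hT.ne' hs0.ne']
  field_simp
  ring

theorem lintegral_logCutoffGradSq_le {E : Type*} [NormedAddCommGroup E] [NormedSpace ℝ E]
    [MeasurableSpace E] [BorelSpace E] [FiniteDimensional ℝ E] (μ : Measure E)
    [μ.IsAddHaarMeasure] (hE : 2 ≤ finrank ℝ E) {η : ℝ} (h0 : 0 < η) (h1 : η < 1) :
    ∫⁻ x in {x : E | 0 < ‖x‖ ∧ ‖x‖ < η}, ENNReal.ofReal (logCutoffGradSq η ‖x‖) ∂μ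
      ≤ μ.toSphere univ *
        (ENNReal.ofReal (-log η)⁻¹ * ∫⁻ s in Ioi 1, ENNReal.ofReal (log s ^ 2 / s ^ 2)) := by
  have : Nontrivial E := Module.nontrivial_of_finrank_pos (R := ℝ) (by omega)
  set f : ℝ → ℝ≥0∞ := fun r => ENNReal.ofReal (logCutoffGradSq η r)
  have hf : Measurable f := (measurable_logCutoffGradSq η).ennreal_ofReal
  have hs : MeasurableSet {x : E | 0 < ‖x‖ ∧ ‖x‖ < η} :=
    measurableSet_Ioo.preimage measurable_norm
  rw [← lintegral_Ioo_mul_logCutoffGradSq h0 h1]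
  calc ∫⁻ x in {x : E | 0 < ‖x‖ ∧ ‖x‖ < η}, f ‖x‖ ∂μ
      = ∫⁻ x, (Ioo 0 η).indicator f ‖x‖ ∂μ := by
        rw [← lintegral_indicator hs]
        rfl
    _ = μ.toSphere univ * ∫⁻ r in Ioo 0 η, ENNReal.ofReal (r ^ (finrank ℝ E - 1)) * f r := by
        rw [lintegral_fun_norm_addHaar μ (hf.indicator measurableSet_Ioo)]
        simp only [← indicator_mul_right _ (fun r => ENNReal.ofReal (r ^ (finrank ℝ E - 1)))]
        rw [lintegral_indicator measurableSet_Ioo, Measure.restrict_restrict measurableSet_Ioo,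
          inter_eq_left.2 Ioo_subset_Ioi_self]
    _ ≤ μ.toSphere univ * ∫⁻ r in Ioo 0 η, ENNReal.ofReal (r * logCutoffGradSq η r) := by
        gcongr 1
        refine setLIntegral_mono
          (measurable_id.mul (measurable_logCutoffGradSq η)).ennreal_ofReal fun r hr => ?_
        rw [← ENNReal.ofReal_mul (pow_nonneg hr.1.le _)]
        gcongr
        · exact mul_nonneg (sq_nonneg _) (inv_nonneg.2 (sq_nonneg _))
        · exact pow_le_of_le_one hr.1.le (hr.2.trans h1).le (by omega)

/-- Lemma `PSILEM`, second part: for the logarithmic cut-off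
`ψ_η(x) = ln(−ln‖x‖) − ln(−ln η)` on `0 < ‖x‖ < η`, the quantity
`∫ ψ_η² |∇ψ_η|² = ∫_{0<‖x‖<η} (ln(−ln‖x‖) − ln(−ln η))² (‖x‖ ln‖x‖)^{-2} dx`
tends to `0` as `η → 0⁺` (along `η ∈ (0, e⁻¹)`); hence `‖∇(ψ_η²)‖_{L²(ℝ^d)} → 0`. -/
theorem psi_eta_sq_grad_tendsto_zero (d : ℕ) (hd : 2 ≤ d) :
    Tendsto
      (fun η : ℝ => ∫⁻ x : EuclideanSpace ℝ (Fin d) in {x | 0 < ‖x‖ ∧ ‖x‖ < η},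
        ENNReal.ofReal
          ((Real.log (-Real.log ‖x‖) - Real.log (-Real.log η)) ^ 2 *
            ((‖x‖ * Real.log ‖x‖) ^ 2)⁻¹))
      (nhdsWithin 0 (Set.Ioo 0 (Real.exp (-1)))) (nhds 0) := by
  set μ : Measure (EuclideanSpace ℝ (Fin d)) := volume
  set C := ∫⁻ s in Ioi 1, ENNReal.ofReal (log s ^ 2 / s ^ 2)
  have hC : C ≠ ⊤ := integrableOn_log_sq_div_sq.lintegral_lt_top.ne
  have hbound : ∀ η ∈ Ioo 0 (exp (-1)), ∫⁻ x in {x | 0 < ‖x‖ ∧ ‖x‖ < η},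
      ENNReal.ofReal (logCutoffGradSq η ‖x‖) ∂μ
        ≤ μ.toSphere univ * (ENNReal.ofReal (-log η)⁻¹ * C) := fun η hη =>
    lintegral_logCutoffGradSq_le μ (by rwa [finrank_euclideanSpace_fin]) hη.1
      (hη.2.trans (exp_lt_one_iff.2 (by norm_num)))
  have hinv : Tendsto (fun η => (-log η)⁻¹) (nhdsWithin 0 (Ioo 0 (exp (-1)))) (nhds 0) :=
    tendsto_inv_atTop_zero.comp <| tendsto_neg_atBot_atTop.comp <|
      tendsto_log_nhdsGT_zero.mono_left (nhdsWithin_mono _ Ioo_subset_Ioi_self)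
  have hlim : Tendsto (fun η => μ.toSphere univ * (ENNReal.ofReal (-log η)⁻¹ * C))
      (nhdsWithin 0 (Ioo 0 (exp (-1)))) (nhds 0) := by
    simpa only [ENNReal.ofReal_zero, zero_mul, mul_zero] using ENNReal.Tendsto.const_mul
      (ENNReal.Tendsto.mul_const (ENNReal.tendsto_ofReal hinv) (Or.inr hC))
      (Or.inr (measure_ne_top μ.toSphere univ))
  exact tendsto_of_tendsto_of_tendsto_of_le_of_le' tendsto_const_nhds hlim
    (Eventually.of_forall fun _ => zero_le) (eventually_mem_nhdsWithin.mono hbound)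
end

section
/- Let T ∈ (0, ∞] and set τ := min{1, T/2}. Let k ≥ 0 and A, B ≥ 0 be constants, let g : ℝ → ℝ be nonnegative and locally integrable, and let y : [0, T) → ℝ be nonnegative, continuous on [0, T), and differentiable on (0, T) with y′(t) ≤ g(t)·y(t) + k for all t ∈ (0, T). Assume that for every t ≥ 0 with t + τ ≤ T one has ∫_t^{t+τ} y(s) ds ≤ A and ∫_t^{t+τ} g(s) ds ≤ B. Then y(t) ≤ ( y(0) + A + 2k )·e^{2B} for all t ∈ [0, T). -/
/-!
Grönwall's lemma holds with a merely integrable coefficient: if `u ≤ c + ∫ₐᵗ G u` then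
`(c + ∫ₐᵗ G u) e^{-∫ₐᵗ G}` is absolutely continuous with a.e. nonpositive derivative, so
`u(b) ≤ c e^{∫ₐᵇ G}`; integrating `y' ≤ g y + k` gives `y(t) ≤ (y(a) + k (t - a)) e^{∫ₐᵗ g}`.
It remains to pick a starting point `a` with `t - a ≤ 2`, `y(a) ≤ y(0) + A` and `∫ₐᵗ g ≤ 2B`.
If `t ≤ 2τ`, take `a = 0` and cover `[0, t]` by two windows of length `τ`. If `t > 2τ`, then
`τ = 1`, and on the window `[t - 1, t]` the function `y` falls below its average, hence below `A`,
at some point `a`.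
-/

open MeasureTheory Set Filter

theorem LipschitzOnWith.comp_absolutelyContinuousOnInterval {X Y : Type*} [PseudoMetricSpace X]
    [PseudoMetricSpace Y] {f : X → Y} {K : NNReal} {s : Set X} (hf : LipschitzOnWith K f s)
    {g : ℝ → X} {a b : ℝ} (hg : AbsolutelyContinuousOnInterval g a b)
    (hgs : MapsTo g (uIcc a b) s) : AbsolutelyContinuousOnInterval (f ∘ g) a b := by
  unfold AbsolutelyContinuousOnInterval at hg ⊢
  have hKg := hg.const_mul (K : ℝ)
  rw [mul_zero] at hKg
  refine squeeze_zero' (Eventually.of_forall fun E => Finset.sum_nonneg fun _ _ => dist_nonneg)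
    ?_ hKg
  filter_upwards [mem_inf_of_right (mem_principal_self _)] with E hE
  rw [Finset.mul_sum]
  gcongr with i hi
  exact hf.dist_le_mul _ (hgs (hE.1 i hi).1) _ (hgs (hE.1 i hi).2)

theorem ContDiff.comp_absolutelyContinuousOnInterval {f g : ℝ → ℝ} {a b : ℝ}
    (hf : ContDiff ℝ 1 f) (hg : AbsolutelyContinuousOnInterval g a b) :
    AbsolutelyContinuousOnInterval (f ∘ g) a b := by
  obtain ⟨C, hC⟩ := hg.exists_bound
  obtain ⟨K, hK⟩ :=
    hf.contDiffOn.exists_lipschitzOnWith one_ne_zero (convex_Icc (-C) C) isCompact_Icc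
  exact hK.comp_absolutelyContinuousOnInterval hg fun x hx => abs_le.1 (hC x hx)

theorem AbsolutelyContinuousOnInterval.le_of_ae_deriv_nonpos {f : ℝ → ℝ} {a b : ℝ}
    (hab : a ≤ b) (hf : AbsolutelyContinuousOnInterval f a b)
    (hf' : ∀ᵐ x, x ∈ Icc a b → deriv f x ≤ 0) : f b ≤ f a := by
  have h : 0 ≤ ∫ x in a..b, -deriv f x :=
    intervalIntegral.integral_nonneg_of_ae_restrict hab <|
      (ae_restrict_iff' measurableSet_Icc).2 <| hf'.mono fun x hx hmem => neg_nonneg.2 (hx hmem)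
  rw [intervalIntegral.integral_neg, hf.integral_deriv_eq_sub] at h
  linarith

theorem le_mul_exp_integral_of_le_add_integral {G u : ℝ → ℝ} {a b c : ℝ} (hab : a ≤ b)
    (hG : IntervalIntegrable G volume a b) (hG0 : ∀ t ∈ Icc a b, 0 ≤ G t)
    (hGu : IntervalIntegrable (fun t => G t * u t) volume a b)
    (hu : ∀ t ∈ Icc a b, u t ≤ c + ∫ s in a..t, G s * u s) :
    u b ≤ c * Real.exp (∫ s in a..b, G s) := by
  set H := fun t => ∫ s in a..t, G s
  set R := fun t => ∫ s in a..t, G s * u s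
  have ha : a ∈ uIcc a b := left_mem_uIcc
  -- `(c + R) e^{-H}` is nonincreasing: its derivative is `G e^{-H} (u - (c + R)) ≤ 0`.
  have hφ : AbsolutelyContinuousOnInterval (fun t => (c + R t) * Real.exp (-H t)) a b :=
    ((LipschitzWith.const c).lipschitzOnWith.absolutelyContinuousOnInterval.fun_add
      (hGu.absolutelyContinuousOnInterval_intervalIntegral ha)).fun_mul
      (Real.contDiff_exp.comp_absolutelyContinuousOnInterval
        (hG.absolutelyContinuousOnInterval_intervalIntegral ha).fun_neg)
  have hφ' : ∀ᵐ x, x ∈ Icc a b → deriv (fun t => (c + R t) * Real.exp (-H t)) x ≤ 0 := by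
    filter_upwards [hG.ae_hasDerivAt_integral, hGu.ae_hasDerivAt_integral] with x hH hR hx
    rw [← uIcc_of_le hab] at hx
    have hd : HasDerivAt (fun t => (c + R t) * Real.exp (-H t))
        (G x * u x * Real.exp (-H x) + (c + R x) * (Real.exp (-H x) * -G x)) x :=
      ((hR hx a ha).const_add c).mul (hH hx a ha).neg.exp
    rw [hd.deriv]
    have hux := hu x (uIcc_of_le hab ▸ hx)
    have hGx := hG0 x (uIcc_of_le hab ▸ hx)
    have hexp := Real.exp_pos (-H x)
    calc _ = G x * Real.exp (-H x) * (u x - (c + R x)) := by ring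
      _ ≤ 0 := mul_nonpos_of_nonneg_of_nonpos (by positivity) (by linarith)
  have hdec := hφ.le_of_ae_deriv_nonpos hab hφ'
  simp only [R, H, intervalIntegral.integral_same, add_zero, neg_zero, Real.exp_zero, mul_one,
    Real.exp_neg, ← div_eq_mul_inv, div_le_iff₀ (Real.exp_pos _)] at hdec
  exact (hu b (right_mem_Icc.2 hab)).trans hdec

theorem le_mul_exp_integral_of_hasDerivWithinAt_le {y y' g : ℝ → ℝ} {a b k : ℝ} (hab : a ≤ b)
    (hk : 0 ≤ k) (hg : IntervalIntegrable g volume a b) (hg0 : ∀ t ∈ Icc a b, 0 ≤ g t)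
    (hy : ContinuousOn y (Icc a b)) (hy' : ∀ t ∈ Ioo a b, HasDerivWithinAt y (y' t) (Ioi t) t)
    (hy'le : ∀ t ∈ Ioo a b, y' t ≤ g t * y t + k) :
    y b ≤ (y a + k * (b - a)) * Real.exp (∫ s in a..b, g s) := by
  have hgy : IntervalIntegrable (fun t => g t * y t) volume a b :=
    hg.mul_continuousOn (uIcc_of_le hab ▸ hy)
  refine le_mul_exp_integral_of_le_add_integral hab hg hg0 hgy fun t ht => ?_
  have hgy' : IntervalIntegrable (fun t => g t * y t) volume a t :=
    hgy.mono_set (uIcc_subset_uIcc_left (uIcc_of_le hab ▸ Icc_subset_uIcc ht))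
  have hsub : Icc a t ⊆ Icc a b := Icc_subset_Icc_right ht.2
  have hftc : y t - y a ≤ ∫ s in a..t, (g s * y s + k) :=
    intervalIntegral.sub_le_integral_of_hasDeriv_right_of_le ht.1 (hy.mono hsub)
      (fun s hs => hy' s (Ioo_subset_Ioo_right ht.2 hs))
      (((intervalIntegrable_iff_integrableOn_Icc_of_le ht.1).1 hgy').add
        (integrableOn_const measure_Icc_lt_top.ne))
      (fun s hs => hy'le s (Ioo_subset_Ioo_right ht.2 hs))
  rw [intervalIntegral.integral_add hgy' intervalIntegrable_const, intervalIntegral.integral_const,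
    smul_eq_mul] at hftc
  nlinarith [ht.2]

theorem exists_mem_Icc_mul_le_integral {f : ℝ → ℝ} {a b : ℝ} (hab : a ≤ b)
    (hf : ContinuousOn f (Icc a b)) : ∃ c ∈ Icc a b, (b - a) * f c ≤ ∫ x in a..b, f x := by
  obtain ⟨c, hc, hmin⟩ := isCompact_Icc.exists_isMinOn (nonempty_Icc.2 hab) hf
  refine ⟨c, hc, ?_⟩
  simpa using intervalIntegral.integral_mono_on (μ := volume) hab intervalIntegrable_const
    (hf.intervalIntegrable_of_Icc hab) fun x hx => hmin hx

theorem integral_le_integral_add_integral_of_le {f : ℝ → ℝ} {a b c d : ℝ} (had : a ≤ d)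
    (hdc : d ≤ c) (hcb : c ≤ b) (hf : IntervalIntegrable f volume a b)
    (hf0 : ∀ x ∈ Icc a b, 0 ≤ f x) :
    ∫ x in a..b, f x ≤ (∫ x in a..c, f x) + ∫ x in d..b, f x := by
  have hint : ∀ {u v}, a ≤ u → u ≤ v → v ≤ b → IntervalIntegrable f volume u v :=
    fun hu huv hv => hf.mono_set <| by
      rw [uIcc_of_le huv, uIcc_of_le (hu.trans (huv.trans hv))]
      exact Icc_subset_Icc hu hv
  rw [← intervalIntegral.integral_add_adjacent_intervals (hint le_rfl (had.trans hdc) hcb)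
    (hint (had.trans hdc) hcb le_rfl)]
  refine add_le_add_right (intervalIntegral.integral_mono_interval hdc hcb le_rfl ?_
    (hint had (hdc.trans hcb) le_rfl)) _
  exact (ae_restrict_iff' measurableSet_Ioc).2 <| ae_of_all _ fun x hx =>
    hf0 x ⟨had.trans hx.1.le, hx.2⟩

theorem exists_mem_Icc_le_and_integral_le {y g : ℝ → ℝ} {t A B : ℝ}
    (hy : ContinuousOn y (Icc (t - 1) t)) (hyA : ∫ x in (t - 1)..t, y x ≤ A)
    (hg : IntervalIntegrable g volume (t - 1) t) (hg0 : ∀ x ∈ Icc (t - 1) t, 0 ≤ g x)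
    (hgB : ∫ x in (t - 1)..t, g x ≤ B) :
    ∃ a ∈ Icc (t - 1) t, y a ≤ A ∧ ∫ x in a..t, g x ≤ B := by
  obtain ⟨a, ha, hmin⟩ := exists_mem_Icc_mul_le_integral (by linarith : t - 1 ≤ t) hy
  rw [sub_sub_cancel, one_mul] at hmin
  refine ⟨a, ha, hmin.trans hyA, le_trans ?_ hgB⟩
  exact intervalIntegral.integral_mono_interval ha.1 ha.2 le_rfl
    ((ae_restrict_iff' measurableSet_Ioc).2 <| ae_of_all _ fun x hx =>
      hg0 x (Ioc_subset_Icc_self hx)) hg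

theorem integral_le_two_mul_of_integral_window_le {g : ℝ → ℝ} {τ t B : ℝ} (ht0 : 0 ≤ t)
    (ht : t ≤ 2 * τ) (hg : IntervalIntegrable g volume 0 (max t τ))
    (hg0 : ∀ x ∈ Icc 0 (max t τ), 0 ≤ g x)
    (hwin : ∀ s, 0 ≤ s → s + τ ≤ max t τ → ∫ x in s..s + τ, g x ≤ B) :
    ∫ x in 0..t, g x ≤ 2 * B := by
  set m := max t τ
  have hτm : τ ≤ m := le_max_right t τ
  have hmτ : m ≤ 2 * τ := max_le ht (by linarith)
  calc ∫ x in 0..t, g x ≤ ∫ x in 0..m, g x :=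
        intervalIntegral.integral_mono_interval le_rfl ht0 (le_max_left t τ)
          ((ae_restrict_iff' measurableSet_Ioc).2 <| ae_of_all _ fun x hx =>
            hg0 x (Ioc_subset_Icc_self hx)) hg
    _ ≤ (∫ x in 0..τ, g x) + ∫ x in (m - τ)..m, g x :=
        integral_le_integral_add_integral_of_le (by linarith) (by linarith) hτm hg hg0
    _ ≤ B + B := by
        refine add_le_add ?_ ?_
        · simpa using hwin 0 le_rfl (by simpa using hτm)
        · simpa using hwin (m - τ) (by linarith) (by simp)
    _ = 2 * B := by ring

noncomputable def windowLength (T : EReal) : ℝ := if T = ⊤ then 1 else min 1 (T.toReal / 2)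

theorem windowLength_pos {T : EReal} (hT : 0 < T) : 0 < windowLength T := by
  unfold windowLength
  split_ifs with h
  · exact one_pos
  · exact lt_min one_pos (half_pos (EReal.toReal_pos hT h))

theorem windowLength_le_one (T : EReal) : windowLength T ≤ 1 := by
  unfold windowLength
  split_ifs
  exacts [le_rfl, min_le_left _ _]

theorem two_mul_windowLength_le {T : EReal} (hT : 0 < T) :
    ((2 * windowLength T : ℝ) : EReal) ≤ T := by
  unfold windowLength
  split_ifs with h
  · simp [h]
  · refine (EReal.coe_le_coe_iff.2 ?_).trans_eq (EReal.coe_toReal h hT.ne_bot)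
    linarith [min_le_right 1 (T.toReal / 2)]

theorem windowLength_eq_one {T : EReal} {t : ℝ} (htT : (t : EReal) < T)
    (ht : 2 * windowLength T < t) : windowLength T = 1 := by
  unfold windowLength at *
  split_ifs at * with h
  · rfl
  · have : t < T.toReal := by
      rwa [← EReal.coe_toReal h (ne_bot_of_gt htT), EReal.coe_lt_coe_iff] at htT
    rcases min_choice 1 (T.toReal / 2) with h1 | h1
    · exact h1
    · linarith

/-- The ODE-comparison argument used in Lemmas `RHOL2` and `LEM13`: if `y' ≤ g y + k`
on `(0, T)` with `T ∈ (0, ∞]`, `τ = min{1, T/2}`, and the sliding integrals of `y`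
and `g` over intervals of length `τ` are bounded by `A` and `B` respectively, then
`y(t) ≤ (y(0) + A + 2k) e^{2B}` on `[0, T)`. -/
theorem ode_comparison_time_averaged
    (T : EReal) (hT : 0 < T) (τ : ℝ)
    (hτ : τ = if T = ⊤ then 1 else min 1 (T.toReal / 2))
    (k A B : ℝ) (hk : 0 ≤ k) (hA : 0 ≤ A) (hB : 0 ≤ B)
    (g : ℝ → ℝ) (hg : ∀ s, 0 ≤ g s)
    (hgloc : ∀ t₁ t₂ : ℝ, 0 ≤ t₁ → (t₂ : EReal) < T → IntegrableOn g (Set.Icc t₁ t₂))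
    (y y' : ℝ → ℝ)
    (hynonneg : ∀ t : ℝ, 0 ≤ t → (t : EReal) < T → 0 ≤ y t)
    (hycont : ContinuousOn y {s : ℝ | 0 ≤ s ∧ (s : EReal) < T})
    (hyderiv : ∀ t : ℝ, 0 < t → (t : EReal) < T → HasDerivAt y (y' t) t)
    (hyineq : ∀ t : ℝ, 0 < t → (t : EReal) < T → y' t ≤ g t * y t + k)
    (hyavg : ∀ t : ℝ, 0 ≤ t → ((t + τ : ℝ) : EReal) ≤ T → ∫ s in t..(t + τ), y s ≤ A)
    (hgavg : ∀ t : ℝ, 0 ≤ t → ((t + τ : ℝ) : EReal) ≤ T → ∫ s in t..(t + τ), g s ≤ B) :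
    ∀ t : ℝ, 0 ≤ t → (t : EReal) < T →
      y t ≤ (y 0 + A + 2 * k) * Real.exp (2 * B) := by
  intro t ht0 htT
  replace hτ : τ = windowLength T := hτ
  have hlt : ∀ {u}, u ≤ t → (u : EReal) < T := fun hu => (EReal.coe_le_coe_iff.2 hu).trans_lt htT
  have hy0 : 0 ≤ y 0 := hynonneg 0 le_rfl (hlt ht0)
  have hgi : ∀ {u v : ℝ}, 0 ≤ u → u ≤ v → (v : EReal) < T → IntervalIntegrable g volume u v :=
    fun hu huv hv => (intervalIntegrable_iff_integrableOn_Icc_of_le huv).2 (hgloc _ _ hu hv)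
  have gronwall : ∀ a, 0 ≤ a → a ≤ t →
      y t ≤ (y a + k * (t - a)) * Real.exp (∫ s in a..t, g s) := fun a ha hat =>
    le_mul_exp_integral_of_hasDerivWithinAt_le hat hk (hgi ha hat htT) (fun s _ => hg s)
      (hycont.mono fun s hs => ⟨ha.trans hs.1, hlt hs.2⟩)
      (fun s hs => (hyderiv s (ha.trans_lt hs.1) (hlt hs.2.le)).hasDerivWithinAt)
      (fun s hs => hyineq s (ha.trans_lt hs.1) (hlt hs.2.le))
  suffices ∃ a, 0 ≤ a ∧ a ≤ t ∧ t - a ≤ 2 ∧ y a ≤ y 0 + A ∧ ∫ s in a..t, g s ≤ 2 * B by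
    obtain ⟨a, ha0, hat, hta, hya, hga⟩ := this
    refine (gronwall a ha0 hat).trans (mul_le_mul ?_ (Real.exp_le_exp.2 hga) (Real.exp_pos _).le
      (by positivity))
    nlinarith
  rcases le_or_gt t (2 * τ) with hshort | hlong
  · have hmaxT : ((max t τ : ℝ) : EReal) < T := by
      refine max_lt htT ((EReal.coe_lt_coe_iff.2 ?_).trans_le (hτ ▸ two_mul_windowLength_le hT))
      linarith [hτ ▸ windowLength_pos hT]
    refine ⟨0, le_rfl, ht0, by linarith [hτ ▸ windowLength_le_one T], by linarith, ?_⟩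
    exact integral_le_two_mul_of_integral_window_le ht0 hshort (hgi le_rfl (by positivity) hmaxT)
      (fun x _ => hg x) fun s hs0 hs => hgavg s hs0 ((EReal.coe_le_coe_iff.2 hs).trans hmaxT.le)
  · obtain rfl : τ = 1 := hτ ▸ windowLength_eq_one htT (hτ ▸ hlong)
    have hwin : ((t - 1 + 1 : ℝ) : EReal) ≤ T := by simpa using htT.le
    obtain ⟨a, ha, hya, hga⟩ := exists_mem_Icc_le_and_integral_le
      (hycont.mono fun s hs => ⟨by linarith [hs.1], hlt hs.2⟩)
      (by simpa using hyavg (t - 1) (by linarith) hwin) (hgi (by linarith) (by linarith) htT)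
      (fun x _ => hg x) (by simpa using hgavg (t - 1) (by linarith) hwin)
    exact ⟨a, by linarith [ha.1], ha.2, by linarith [ha.1], by linarith, by linarith⟩
end

section
/- For every real number a > 0 one has a^{4/3}·|ln a|^{4/3} ≤ 16·e^{−4/3}·a^{3/2} + e^{−4/3}. -/
/-!
Both bounds come from `y e^{-y} ≤ e^{-1}`. For `a ≤ 1` it gives `a |ln a| ≤ e^{-1}`, so the left
side is at most `e^{-4/3}`. For `a ≥ 1`, applied to `y = ln a / 8`, it gives
`ln a ≤ 8 e^{-1} a^{1/8}`, hence `|ln a|^{4/3} ≤ 16 e^{-4/3} a^{1/6}`, and `a^{4/3} a^{1/6} = a^{3/2}`.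
-/

open Real

namespace Real

lemma negMulLog_le_exp_neg_one {x : ℝ} (hx : 0 ≤ x) : negMulLog x ≤ exp (-1) := by
  rcases hx.eq_or_lt with rfl | hx
  · simpa using (exp_pos _).le
  · simpa [negMulLog, exp_log hx, mul_comm] using mul_exp_neg_le_exp_neg_one (-log x)

lemma log_le_mul_exp_neg_one {x : ℝ} (hx : 0 ≤ x) : log x ≤ x * exp (-1) := by
  rcases hx.eq_or_lt with rfl | hx
  · simp
  · have h := mul_exp_neg_le_exp_neg_one (log x)
    rw [exp_neg, exp_log hx, ← div_eq_mul_inv, div_le_iff₀ hx] at h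
    linarith

/-- The sharp form of `Real.log_le_rpow_div`. -/
lemma log_le_rpow_mul_exp_neg_one_div {x ε : ℝ} (hx : 0 ≤ x) (hε : 0 < ε) :
    log x ≤ x ^ ε * exp (-1) / ε := by
  rcases hx.eq_or_lt with rfl | hx
  · simp [zero_rpow hε.ne']
  · rw [le_div_iff₀ hε, mul_comm, ← log_rpow hx]
    exact log_le_mul_exp_neg_one (rpow_nonneg hx.le ε)

lemma rpow_mul_abs_log_rpow_le_exp_neg {x p : ℝ} (hx₀ : 0 ≤ x) (hx₁ : x ≤ 1) (hp : 0 ≤ p) :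
    x ^ p * |log x| ^ p ≤ exp (-p) := by
  rw [← mul_rpow hx₀ (abs_nonneg _), abs_of_nonpos (log_nonpos hx₀ hx₁), neg_eq_neg_one_mul p,
    exp_mul, mul_neg, ← neg_mul]
  exact rpow_le_rpow (negMulLog_nonneg hx₀ hx₁) (negMulLog_le_exp_neg_one hx₀) hp

lemma log_rpow_le_rpow_mul {x p ε : ℝ} (hx : 1 ≤ x) (hp : 0 ≤ p) (hε : 0 < ε) :
    log x ^ p ≤ (exp (-1) / ε) ^ p * x ^ (ε * p) := by
  have hx₀ : 0 ≤ x := zero_le_one.trans hx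
  calc log x ^ p ≤ (x ^ ε * exp (-1) / ε) ^ p :=
        rpow_le_rpow (log_nonneg hx) (log_le_rpow_mul_exp_neg_one_div hx₀ hε) hp
    _ = (exp (-1) / ε) ^ p * x ^ (ε * p) := by
        rw [mul_div_assoc, mul_rpow (rpow_nonneg hx₀ ε) (by positivity), rpow_mul hx₀, mul_comm]

end Real

/-- The elementary inequality `a^{4/3} |ln a|^{4/3} ≤ 16 e^{−4/3} a^{3/2} + e^{−4/3}`
for `a > 0`, used in the proof of Lemma `LEMLOGL`. -/
theorem rpow_mul_abs_log_rpow_le_four_thirds (a : ℝ) (ha : 0 < a) :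
    a ^ ((4 : ℝ) / 3) * |Real.log a| ^ ((4 : ℝ) / 3) ≤
      16 * Real.exp (-(4 / 3)) * a ^ ((3 : ℝ) / 2) + Real.exp (-(4 / 3)) := by
  rcases le_total a 1 with ha₁ | ha₁
  · have hsmall := rpow_mul_abs_log_rpow_le_exp_neg ha.le ha₁ (p := 4 / 3) (by norm_num)
    have : 0 ≤ 16 * exp (-(4 / 3)) * a ^ ((3 : ℝ) / 2) := by positivity
    linarith
  · have hconst : (exp (-1) / (1 / 8)) ^ ((4 : ℝ) / 3) = 16 * exp (-(4 / 3)) := by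
      have h8 : (8 : ℝ) ^ ((4 : ℝ) / 3) = 16 := by
        rw [show (8 : ℝ) = 2 ^ 3 by norm_num, ← rpow_natCast_mul (by norm_num)]
        norm_num
      rw [show exp (-1) / (1 / 8) = 8 * exp (-1) by ring, mul_rpow (by norm_num) (exp_pos _).le, h8, ← exp_mul]
      norm_num
    have hlarge := log_rpow_le_rpow_mul ha₁ (p := 4 / 3) (by norm_num) (ε := 1 / 8) (by norm_num)
    rw [hconst, ← abs_of_nonneg (log_nonneg ha₁)] at hlarge
    calc a ^ ((4 : ℝ) / 3) * |log a| ^ ((4 : ℝ) / 3)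
        ≤ a ^ ((4 : ℝ) / 3) * (16 * exp (-(4 / 3)) * a ^ ((1 : ℝ) / 8 * (4 / 3))) := by gcongr
      _ = 16 * exp (-(4 / 3)) * a ^ ((3 : ℝ) / 2) := by
        rw [show (3 : ℝ) / 2 = 4 / 3 + 1 / 8 * (4 / 3) by norm_num, rpow_add ha]
        ring
      _ ≤ _ := le_add_of_nonneg_right (exp_pos _).le
end
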